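/- Core of Proposition 1 (the scheme [[p_c = 1/2^n, X^c Z^c]] is not IND-secure), part 1: let Ψ u = (2^n)^{-1/2} · i^{wt(u)} (the n-fold tensor power of (|0⟩ + i|1⟩)/√2), where wt(u) is the number of indices i with u i = 1, and let σ₁ = Ψ Ψᴴ be the corresponding rank-one projector (outer product of Ψ with its conjugate). Then (1/2^n) • ∑_{c : Fin n → ZMod 2} (X^c * Z^c) * σ₁ * (X^c * Z^c)ᴴ = σ₁; i.e., the ciphertext of σ₁ averaged over all keys c equals σ₁ itself. -/

import Mathlib

open Matrix BigOperators

/-- The inner product `a ⊙ b = ∑ i, a i * b i` in `ZMod 2`. -/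
def bdot {n : ℕ} (a b : Fin n → ZMod 2) : ZMod 2 := ∑ i, a i * b i

/-- `χ(a,b) = (-1)^(a ⊙ b)` as a complex number. -/
noncomputable def chi {n : ℕ} (a b : Fin n → ZMod 2) : ℂ :=
  if bdot a b = 1 then -1 else 1

/-- The `n`-qubit Pauli string `X^a`: `|v⟩ ↦ |v ⊕ a⟩`. -/
noncomputable def PX {n : ℕ} (a : Fin n → ZMod 2) :
    Matrix (Fin n → ZMod 2) (Fin n → ZMod 2) ℂ :=
  fun u v => if u = v + a then 1 else 0

/-- The `n`-qubit Pauli string `Z^b`: `|v⟩ ↦ (-1)^(b ⊙ v) |v⟩`. -/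
noncomputable def PZ {n : ℕ} (b : Fin n → ZMod 2) :
    Matrix (Fin n → ZMod 2) (Fin n → ZMod 2) ℂ :=
  fun u v => if u = v then chi b v else 0

/-- Hamming weight of a bit string. -/
def wt {n : ℕ} (u : Fin n → ZMod 2) : ℕ :=
  (Finset.univ.filter fun i => u i = 1).card

/-- The projector `|Ψ⟩⟨Ψ|` onto the n-fold tensor power of `(|0⟩ + i|1⟩)/√2`. -/
noncomputable def sigma1 (n : ℕ) :
    Matrix (Fin n → ZMod 2) (Fin n → ZMod 2) ℂ :=
  fun u v => ((Real.sqrt (2 ^ n) : ℂ)⁻¹ * Complex.I ^ wt u) *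
    (starRingEnd ℂ) ((Real.sqrt (2 ^ n) : ℂ)⁻¹ * Complex.I ^ wt v)

/-!
`Ψ` is a common eigenvector of all the `X^c Z^c`: since `XZ (|0⟩ + i|1⟩) = -i (|0⟩ + i|1⟩)`,
taking tensor powers gives `X^c Z^c Ψ = (-i)^{wt c} Ψ`. The eigenvalue has modulus one, so each
conjugation `U |Ψ⟩⟨Ψ| Uᴴ = |UΨ⟩⟨UΨ|` fixes `σ₁`, and so does their average.
-/

lemma zmod_two_eq_zero_or_eq_one (x : ZMod 2) : x = 0 ∨ x = 1 := by
  revert x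
  decide

lemma wt_eq_sum_val {n : ℕ} (u : Fin n → ZMod 2) : wt u = ∑ i, (u i).val := by
  rw [wt, Finset.card_filter]
  refine Finset.sum_congr rfl fun i _ => ?_
  rcases zmod_two_eq_zero_or_eq_one (u i) with h | h <;> simp [h, ZMod.val_one]

lemma neg_one_pow_val_add (a b : ZMod 2) :
    (-1 : ℂ) ^ (a + b).val = (-1) ^ a.val * (-1) ^ b.val := by
  rw [ZMod.val_add, ← neg_one_pow_eq_pow_mod_two, pow_add]

lemma neg_one_pow_val_sum {ι : Type*} (s : Finset ι) (f : ι → ZMod 2) :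
    (-1 : ℂ) ^ (∑ i ∈ s, f i).val = ∏ i ∈ s, (-1 : ℂ) ^ (f i).val := by
  induction s using Finset.cons_induction with
  | empty => simp
  | cons a s _ ih => rw [Finset.sum_cons, Finset.prod_cons, neg_one_pow_val_add, ih]

lemma chi_eq_prod {n : ℕ} (a b : Fin n → ZMod 2) :
    chi a b = ∏ i, (-1 : ℂ) ^ (a i * b i).val := by
  rw [chi, ← neg_one_pow_val_sum, ← bdot]
  rcases zmod_two_eq_zero_or_eq_one (bdot a b) with h | h <;> simp [h, ZMod.val_one]

lemma PX_mulVec {n : ℕ} (a : Fin n → ZMod 2) (f : (Fin n → ZMod 2) → ℂ) :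
    PX a *ᵥ f = fun u => f (u - a) := by
  ext u
  simp [PX, mulVec, dotProduct, ← sub_eq_iff_eq_add]

lemma PZ_eq_diagonal {n : ℕ} (b : Fin n → ZMod 2) : PZ b = diagonal (chi b) := by
  ext u v
  by_cases h : u = v <;> simp [PZ, h]

noncomputable def psi (n : ℕ) : (Fin n → ZMod 2) → ℂ :=
  fun u => (Real.sqrt (2 ^ n) : ℂ)⁻¹ * Complex.I ^ wt u

lemma sigma1_eq_vecMulVec (n : ℕ) : sigma1 n = vecMulVec (psi n) (star (psi n)) := rfl

-- the one-qubit identity `XZ (|0⟩ + i|1⟩) = -i (|0⟩ + i|1⟩)`, read off coordinatewise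
lemma neg_one_pow_val_mul_I_pow_val_sub (a b : ZMod 2) :
    (-1 : ℂ) ^ (b * (a - b)).val * Complex.I ^ (a - b).val
      = (-Complex.I) ^ b.val * Complex.I ^ a.val := by
  rcases zmod_two_eq_zero_or_eq_one a with rfl | rfl <;>
    rcases zmod_two_eq_zero_or_eq_one b with rfl | rfl <;> simp [ZMod.val_one]

lemma chi_mul_I_pow_wt_sub {n : ℕ} (c u : Fin n → ZMod 2) :
    chi c (u - c) * Complex.I ^ wt (u - c) = (-Complex.I) ^ wt c * Complex.I ^ wt u := by
  simp only [chi_eq_prod, wt_eq_sum_val, ← Finset.prod_pow_eq_pow_sum, ← Finset.prod_mul_distrib]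
  exact Finset.prod_congr rfl fun i _ => neg_one_pow_val_mul_I_pow_val_sub (u i) (c i)

lemma PX_mul_PZ_mulVec_psi {n : ℕ} (c : Fin n → ZMod 2) :
    (PX c * PZ c) *ᵥ psi n = (-Complex.I) ^ wt c • psi n := by
  ext u
  simp only [← mulVec_mulVec, PZ_eq_diagonal, PX_mulVec, mulVec_diagonal, psi, Pi.smul_apply,
    smul_eq_mul]
  rw [mul_left_comm, chi_mul_I_pow_wt_sub, mul_left_comm]

lemma mul_vecMulVec_star_mul_conjTranspose {m R : Type*} [Fintype m] [CommRing R] [StarRing R]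
    {U : Matrix m m R} {v : m → R} {r : R} (hv : U *ᵥ v = r • v) (hr : star r * r = 1) :
    U * vecMulVec v (star v) * Uᴴ = vecMulVec v (star v) := by
  rw [mul_vecMulVec, vecMulVec_mul, ← star_mulVec, hv, star_smul, smul_vecMulVec,
    vecMulVec_smul, smul_smul, mul_comm, hr, one_smul]

lemma PX_mul_PZ_conj_sigma1 {n : ℕ} (c : Fin n → ZMod 2) :
    (PX c * PZ c) * sigma1 n * (PX c * PZ c)ᴴ = sigma1 n := by
  rw [sigma1_eq_vecMulVec]
  refine mul_vecMulVec_star_mul_conjTranspose (PX_mul_PZ_mulVec_psi c) ?_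
  rw [star_pow, ← mul_pow]
  simp

theorem xz_scheme_fixes_sigma1 (n : ℕ) :
    ((2 : ℂ) ^ n)⁻¹ • ∑ c : Fin n → ZMod 2,
        (PX c * PZ c) * sigma1 n * (PX c * PZ c)ᴴ = sigma1 n := by
  have hcard : Fintype.card (Fin n → ZMod 2) = 2 ^ n := by simp
  simp only [PX_mul_PZ_conj_sigma1, Finset.sum_const, Finset.card_univ, hcard,
    ← Nat.cast_smul_eq_nsmul ℂ, smul_smul]
  push_cast
  rw [inv_mul_cancel₀ (pow_ne_zero n two_ne_zero), one_smul]
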